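/- arXiv:2502.02799 — 7 statements merged into one kernel-verified Lean document; each statement's English description precedes it below -/
import Mathlib

section
/- Let C ⊆ F_2^n be a linear code of dimension k. Then there exist at least 2^(n−k) distinct subsets S ⊆ [n] that are unweighted one-sided 1/2-sparsifiers of C. -/
/-- The Hamming weight of the projection of `c` onto the coordinates in `S`,
i.e. the number of coordinates `i ∈ S` with `c i ≠ 0`. -/
def wtOn {n : ℕ} (S : Finset (Fin n)) (c : Fin n → ZMod 2) : ℕ :=
  (S.filter fun i => c i ≠ 0).card

/-- `S` is an unweighted one-sided `α`-sparsifier of the linear code `C` if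
for all codewords `c ∈ C`, `wt(c_S) ≥ α · wt(c)`. -/
def IsSparsifier {n : ℕ} (C : Submodule (ZMod 2) (Fin n → ZMod 2)) (α : ℝ)
    (S : Finset (Fin n)) : Prop :=
  ∀ c ∈ C, α * (hammingNorm c : ℝ) ≤ (wtOn S c : ℝ)

/-!
Each coset `y + C` has a leader `x` of minimum weight, and its zero set `Z` is a `1/2`-sparsifier:
for `c ∈ C`, adding `c` to `x` gains weight on `Z ∩ supp c` and loses it on `Zᶜ ∩ supp c`, so
minimality gives `|Zᶜ ∩ supp c| ≤ |Z ∩ supp c|`. Over `𝔽₂` a vector is determined by its zero set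
and a leader by its coset, so distinct cosets give distinct sparsifiers, and there are
`2^(n-k)` cosets.
-/

open Finset

theorem card_quotient_eq_pow_sub_finrank {K : Type*} [Field K] [Fintype K] {n : ℕ}
    (C : Submodule K (Fin n → K)) :
    Nat.card ((Fin n → K) ⧸ C) = Fintype.card K ^ (n - Module.finrank K C) := by
  rw [Nat.card_eq_fintype_card, Module.card_eq_pow_finrank (K := K), C.finrank_quotient,
    Module.finrank_fin_fun]

namespace BinaryCode

variable {n : ℕ}

def zeroSet (x : Fin n → ZMod 2) : Finset (Fin n) := univ.filter (x · = 0)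

theorem zeroSet_injective : Function.Injective (zeroSet (n := n)) := by
  intro x y hxy
  funext i
  have eq_of_zero_iff : ∀ a b : ZMod 2, (a = 0 ↔ b = 0) → a = b := by decide
  exact eq_of_zero_iff _ _ (by simpa [zeroSet] using congrArg (i ∈ ·) hxy)

theorem hammingNorm_eq_sum (c : Fin n → ZMod 2) :
    hammingNorm c = ∑ i, if c i ≠ 0 then 1 else 0 :=
  card_filter _ _

theorem wtOn_eq_sum (S : Finset (Fin n)) (c : Fin n → ZMod 2) :
    wtOn S c = ∑ i, if i ∈ S ∧ c i ≠ 0 then 1 else 0 := by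
  rw [wtOn, ← card_filter]
  congr 1
  ext i
  simp

theorem hammingNorm_add_add_wtOn_compl (x c : Fin n → ZMod 2) :
    hammingNorm (x + c) + wtOn (zeroSet x)ᶜ c = hammingNorm x + wtOn (zeroSet x) c := by
  simp only [hammingNorm_eq_sum, wtOn_eq_sum, ← sum_add_distrib]
  refine sum_congr rfl fun i _ => ?_
  simp only [zeroSet, mem_compl, mem_filter, mem_univ, true_and, Pi.add_apply]
  have flip : ∀ a b : ZMod 2, ((if a + b ≠ 0 then 1 else 0) + if ¬a = 0 ∧ b ≠ 0 then 1 else 0) =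
      (if a ≠ 0 then 1 else 0) + if a = 0 ∧ b ≠ 0 then 1 else 0 := by decide
  exact flip (x i) (c i)

theorem hammingNorm_eq_wtOn_add_wtOn_compl (S : Finset (Fin n)) (c : Fin n → ZMod 2) :
    hammingNorm c = wtOn S c + wtOn Sᶜ c := by
  simp only [hammingNorm_eq_sum, wtOn_eq_sum, ← sum_add_distrib]
  refine sum_congr rfl fun i _ => ?_
  by_cases hi : i ∈ S <;> simp [hi]

theorem hammingNorm_le_two_mul_wtOn_zeroSet {x c : Fin n → ZMod 2}
    (h : hammingNorm x ≤ hammingNorm (x + c)) :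
    hammingNorm c ≤ 2 * wtOn (zeroSet x) c := by
  have := hammingNorm_add_add_wtOn_compl x c
  have := hammingNorm_eq_wtOn_add_wtOn_compl (zeroSet x) c
  omega

def IsCosetLeader (C : Submodule (ZMod 2) (Fin n → ZMod 2)) (x : Fin n → ZMod 2) : Prop :=
  ∀ c ∈ C, hammingNorm x ≤ hammingNorm (x + c)

theorem exists_isCosetLeader (C : Submodule (ZMod 2) (Fin n → ZMod 2))
    (q : (Fin n → ZMod 2) ⧸ C) : ∃ x, Submodule.Quotient.mk x = q ∧ IsCosetLeader C x := by
  classical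
  obtain ⟨y, rfl⟩ := C.mkQ_surjective q
  obtain ⟨x, hxy, hmin⟩ := exists_min_image ({x | x - y ∈ C} : Finset _) hammingNorm ⟨y, by simp⟩
  rw [mem_filter_univ] at hxy
  refine ⟨x, (Submodule.Quotient.eq C).2 hxy, fun c hc => hmin _ ?_⟩
  simpa [add_sub_right_comm] using C.add_mem hxy hc

theorem isSparsifier_zeroSet {C : Submodule (ZMod 2) (Fin n → ZMod 2)} {x : Fin n → ZMod 2}
    (hx : IsCosetLeader C x) : IsSparsifier C (1 / 2) (zeroSet x) := by
  intro c hc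
  have : (hammingNorm c : ℝ) ≤ 2 * wtOn (zeroSet x) c := by
    exact_mod_cast hammingNorm_le_two_mul_wtOn_zeroSet (hx c hc)
  linarith

end BinaryCode

open BinaryCode in
/-- Any `k`-dimensional linear code `C ⊆ 𝔽₂ⁿ` has at least `2^(n-k)` distinct
unweighted one-sided `1/2`-sparsifiers. -/
theorem num_half_sparsifiers (n k : ℕ) (C : Submodule (ZMod 2) (Fin n → ZMod 2))
    (hk : Module.finrank (ZMod 2) C = k) :
    2 ^ (n - k) ≤ {S : Finset (Fin n) | IsSparsifier C (1 / 2) S}.ncard := by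
  choose leader hmk hleader using exists_isCosetLeader C
  have hinj : Function.Injective (zeroSet ∘ leader) :=
    zeroSet_injective.comp (Function.LeftInverse.injective hmk)
  calc 2 ^ (n - k) = Nat.card ((Fin n → ZMod 2) ⧸ C) := by
        rw [card_quotient_eq_pow_sub_finrank, hk, ZMod.card]
    _ = (Set.range (zeroSet ∘ leader)).ncard := (Set.ncard_range_of_injective hinj).symm
    _ ≤ _ := Set.ncard_le_ncard (by rintro _ ⟨q, rfl⟩; exact isSparsifier_zeroSet (hleader q))
end

section
/- Let C ⊆ F_2^n be a linear code of dimension k. If S ⊆ [n] is chosen uniformly at random among all 2^n subsets of [n], then the probability that S is an unweighted one-sided 1/2-sparsifier of C is at least 2^(−k). -/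
/-!
Every coset `x + C` of the code contains a vector `x` of maximal weight, and its support
`S` is a `1/2`-sparsifier: over `𝔽₂`, `wt(x + c) = wt(x) + wt(c) - 2 wt(c_S)`, so
`wt(x + c) ≤ wt(x)` forces `wt(c_S) ≥ wt(c) / 2`. Distinct cosets give distinct supports,
hence there are at least `2^n / 2^k` sparsifiers.
-/

open Finset

lemma Finset.card_symmDiff_add_two_mul_card_inter {α : Type*} [DecidableEq α]
    (s t : Finset α) : #(symmDiff s t) + 2 * #(s ∩ t) = #s + #t := by
  have h := card_sdiff_add_card_eq_card (inter_subset_union (s := s) (t := t))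
  rw [symmDiff_eq_sup_sdiff_inf, ← card_union_add_card_inter]
  simp only [sup_eq_union, inf_eq_inter]
  omega

def hammingSupport {ι α : Type*} [Fintype ι] [Zero α] [DecidableEq α] (x : ι → α) :
    Finset ι :=
  univ.filter fun i => x i ≠ 0

lemma card_hammingSupport {ι α : Type*} [Fintype ι] [Zero α] [DecidableEq α] (x : ι → α) :
    #(hammingSupport x) = hammingNorm x :=
  rfl

section ZModTwo

variable {ι : Type*} [Fintype ι]

lemma hammingSupport_injective :
    Function.Injective (hammingSupport : (ι → ZMod 2) → Finset ι) := by
  intro x y h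
  funext i
  have hiff : x i ≠ 0 ↔ y i ≠ 0 := by
    simpa only [hammingSupport, mem_filter, mem_univ, true_and] using Finset.ext_iff.mp h i
  revert hiff
  generalize x i = a
  generalize y i = b
  decide +revert

variable [DecidableEq ι]

lemma hammingSupport_add (x y : ι → ZMod 2) :
    hammingSupport (x + y) = symmDiff (hammingSupport x) (hammingSupport y) := by
  ext i
  simp only [hammingSupport, mem_symmDiff, mem_filter, mem_univ, true_and, Pi.add_apply]
  generalize x i = a
  generalize y i = b
  decide +revert

lemma hammingNorm_add_add_two_mul_card_inter (x y : ι → ZMod 2) :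
    hammingNorm (x + y) + 2 * #(hammingSupport x ∩ hammingSupport y) =
      hammingNorm x + hammingNorm y := by
  simp only [← card_hammingSupport, hammingSupport_add, card_symmDiff_add_two_mul_card_inter]

end ZModTwo

lemma wtOn_hammingSupport {n : ℕ} (x c : Fin n → ZMod 2) :
    wtOn (hammingSupport x) c = #(hammingSupport x ∩ hammingSupport c) := by
  rw [wtOn, hammingSupport, ← filter_mem_eq_inter]
  simp only [hammingSupport, mem_filter, mem_univ, true_and]

section Code

variable {n : ℕ} (C : Submodule (ZMod 2) (Fin n → ZMod 2))

lemma isSparsifier_half_hammingSupport {x : Fin n → ZMod 2}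
    (hx : ∀ c ∈ C, hammingNorm (x + c) ≤ hammingNorm x) :
    IsSparsifier C (1 / 2) (hammingSupport x) := by
  intro c hc
  have h := hammingNorm_add_add_two_mul_card_inter x c
  have hle : hammingNorm c ≤ 2 * wtOn (hammingSupport x) c := by
    rw [wtOn_hammingSupport]; linarith [hx c hc]
  rw [one_div, inv_mul_le_iff₀ two_pos]
  exact_mod_cast hle

lemma exists_mk_eq_and_isSparsifier_half (q : (Fin n → ZMod 2) ⧸ C) :
    ∃ x, Submodule.Quotient.mk x = q ∧ IsSparsifier C (1 / 2) (hammingSupport x) := by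
  obtain ⟨x, hxq, hmax⟩ := Set.exists_max_image {y | Submodule.Quotient.mk y = q}
    hammingNorm (Set.toFinite _) (Submodule.Quotient.mk_surjective C q)
  refine ⟨x, hxq, isSparsifier_half_hammingSupport C fun c hc => hmax _ ?_⟩
  rw [Set.mem_ofPred_eq, ← hxq, Submodule.Quotient.eq]
  simpa using hc

lemma natCard_quotient_le_ncard_isSparsifier_half :
    Nat.card ((Fin n → ZMod 2) ⧸ C) ≤ {S | IsSparsifier C (1 / 2) S}.ncard := by
  choose rep hrep_mk hrep_sparse using exists_mk_eq_and_isSparsifier_half C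
  rw [← Nat.card_coe_set_eq]
  refine Nat.card_le_card_of_injective (fun q => ⟨hammingSupport (rep q), hrep_sparse q⟩) ?_
  intro q q' h
  rw [← hrep_mk q, ← hrep_mk q', hammingSupport_injective (congrArg Subtype.val h)]

end Code

lemma natCard_quotient_mul_pow_finrank {K V : Type*} [Field K] [Finite K] [AddCommGroup V]
    [Module K V] [Finite V] (C : Submodule K V) :
    Nat.card (V ⧸ C) * Nat.card K ^ Module.finrank K C = Nat.card V := by
  rw [← Module.natCard_eq_pow_finrank, mul_comm, ← Submodule.card_eq_card_quotient_mul_card]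

/-- If `S ⊆ [n]` is chosen uniformly at random among all `2^n` subsets, the
probability that `S` is an unweighted one-sided `1/2`-sparsifier of a
`k`-dimensional linear code `C` is at least `2^(-k)`. -/
theorem prob_half_sparsifier (n k : ℕ) (C : Submodule (ZMod 2) (Fin n → ZMod 2))
    (hk : Module.finrank (ZMod 2) C = k) :
    (2 : ℝ) ^ (-(k : ℤ)) ≤
      ({S : Finset (Fin n) | IsSparsifier C (1 / 2) S}.ncard : ℝ) / 2 ^ n := by
  have hcount : (Nat.card ((Fin n → ZMod 2) ⧸ C) : ℝ) * 2 ^ k = 2 ^ n := by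
    have h := natCard_quotient_mul_pow_finrank C
    simp only [Nat.card_zmod, Nat.card_fun, Nat.card_fin, hk] at h
    exact_mod_cast h
  have hbound : (Nat.card ((Fin n → ZMod 2) ⧸ C) : ℝ) ≤ _ :=
    Nat.cast_le.mpr (natCard_quotient_le_ncard_isSparsifier_half C)
  calc (2 : ℝ) ^ (-(k : ℤ)) = Nat.card ((Fin n → ZMod 2) ⧸ C) / 2 ^ n := by
        rw [← hcount, zpow_neg, zpow_natCast]; field_simp
    _ ≤ _ := by gcongr
end

section
/- Let C ⊆ F_2^n be a linear code of dimension k, and let ε ∈ (0, 1/2) satisfy H(1/2 − ε) < 1 − k/n, where H is the binary entropy function. Then C has an unweighted one-sided 1/2-sparsifier S ⊆ [n] with |S| ≤ n(1/2 + ε). -/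
/-- The binary entropy function `H(x) = x log₂(1/x) + (1-x) log₂(1/(1-x))`.
(Note that in Lean `1/0 = 0` and `logb 2 0 = 0`, so `H 0 = H 1 = 0` holds.) -/
noncomputable def binEnt (x : ℝ) : ℝ :=
  x * Real.logb 2 (1 / x) + (1 - x) * Real.logb 2 (1 / (1 - x))

/-!
Coset-leader argument. A Hamming ball of radius `p n`, `p = 1/2 - ε`, has at most `2 ^ (n H(p))`
points, since each of them has probability at least `2 ^ (-n H(p))` under the `p`-biased product
measure. Hence, when `k + n H(p) < n`, the `2 ^ k` balls around the codewords miss some `x`. Let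
`y` be a vector of minimum weight in the coset `x + C`; its support `T` has more than `p n`
elements. Adding a codeword `c` to `y` flips, inside `T`, exactly the coordinates where `c` is
nonzero, so minimality of `wt y` forces `wt (c_T) ≤ wt (c_Tᶜ)`: the complement of `T` is a
`1/2`-sparsifier of size less than `n - p n = n (1/2 + ε)`.
-/

open Finset Real

section HammingBall

variable {ι β : Type*} [Fintype ι] [DecidableEq ι] [AddGroup β] [Fintype β] [DecidableEq β]

theorem card_filter_hammingDist_eq (P : ℕ → Prop) [DecidablePred P] (c : ι → β) :
    #{x | P (hammingDist x c)} = #{x : ι → β | P (hammingNorm x)} :=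
  card_equiv (Equiv.addLeft (-c)) fun x => by
    simp only [mem_filter, mem_univ, true_and, Equiv.coe_addLeft]
    rw [hammingDist_comm, hammingDist_eq_hammingNorm]

theorem exists_forall_not_hammingDist (P : ℕ → Prop) [DecidablePred P] (C : Finset (ι → β))
    (hC : #C * #{x : ι → β | P (hammingNorm x)} < Fintype.card (ι → β)) :
    ∃ x, ∀ c ∈ C, ¬ P (hammingDist x c) := by
  by_contra! hcover
  have : (univ : Finset (ι → β)) ⊆ C.biUnion fun c => {x | P (hammingDist x c)} := fun x _ => by
    simpa using hcover x
  refine hC.not_ge ((card_le_card this).trans (card_biUnion_le_card_mul _ _ _ fun c _ => ?_))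
  rw [card_filter_hammingDist_eq]

end HammingBall

section BinaryVectors

theorem zmodTwo_support_injective {ι : Type*} [Fintype ι] :
    Function.Injective fun x : ι → ZMod 2 => ({i | x i ≠ 0} : Finset ι) := by
  intro x y hxy
  have key : ∀ a b : ZMod 2, (a ≠ 0 ↔ b ≠ 0) → a = b := by decide
  funext i
  exact key _ _ (by simpa using congrArg (i ∈ ·) hxy)

variable {ι : Type*} [Fintype ι] [DecidableEq ι]

theorem card_filter_hammingNorm_le (P : ℕ → Prop) [DecidablePred P] :
    #{x : ι → ZMod 2 | P (hammingNorm x)} ≤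
      ∑ j ∈ range (Fintype.card ι + 1) with P j, (Fintype.card ι).choose j := by
  rw [card_eq_sum_card_fiberwise (f := hammingNorm) (t := {j ∈ range (Fintype.card ι + 1) | P j})]
  · refine sum_le_sum fun j _ => ?_
    rw [← card_univ, ← card_powersetCard]
    refine card_le_card_of_injOn (fun x : ι → ZMod 2 => ({i | x i ≠ 0} : Finset ι))
      (fun x hx => ?_) zmodTwo_support_injective.injOn
    simp only [coe_filter, Set.mem_ofPred_eq] at hx
    exact mem_powersetCard.2 ⟨subset_univ _, hx.2⟩
  · intro x hx
    simp only [coe_filter, Set.mem_ofPred_eq, mem_univ, true_and] at hx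
    simpa [Nat.lt_succ_iff, hx] using hammingNorm_le_card_fintype

end BinaryVectors

section Entropy

variable {p : ℝ}

theorem two_rpow_neg_mul_binEnt (hp0 : 0 < p) (hp1 : p < 1) (t : ℝ) :
    (2 : ℝ) ^ (-(t * binEnt p)) = p ^ (p * t) * (1 - p) ^ ((1 - p) * t) := by
  have hexp : -(t * binEnt p) = logb 2 p * (p * t) + logb 2 (1 - p) * ((1 - p) * t) := by
    simp only [binEnt, one_div, logb_inv]
    ring
  rw [hexp, rpow_add two_pos, rpow_mul zero_le_two, rpow_mul zero_le_two,
    rpow_logb two_pos (by norm_num) hp0, rpow_logb two_pos (by norm_num) (sub_pos.2 hp1)]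

theorem two_rpow_neg_mul_binEnt_le (hp0 : 0 < p) (hp : p ≤ 1 / 2) {n j : ℕ} (hjn : j ≤ n)
    (hj : (j : ℝ) ≤ p * n) : (2 : ℝ) ^ (-(n * binEnt p)) ≤ p ^ j * (1 - p) ^ (n - j) := by
  have hq : 0 < 1 - p := by linarith
  calc (2 : ℝ) ^ (-(n * binEnt p)) = (1 - p) ^ (n : ℝ) * (p / (1 - p)) ^ (p * n) := by
        rw [two_rpow_neg_mul_binEnt hp0 (by linarith), div_rpow hp0.le hq.le, sub_mul, one_mul,
          rpow_sub hq]
        field_simp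
    _ ≤ (1 - p) ^ (n : ℝ) * (p / (1 - p)) ^ (j : ℝ) := by
        refine mul_le_mul_of_nonneg_left ?_ (rpow_nonneg hq.le _)
        exact rpow_le_rpow_of_exponent_ge (div_pos hp0 hq) ((div_le_one hq).2 (by linarith)) hj
    _ = p ^ j * (1 - p) ^ (n - j) := by
        obtain ⟨m, rfl⟩ := Nat.exists_eq_add_of_le hjn
        rw [rpow_natCast, rpow_natCast, Nat.add_sub_cancel_left, div_pow, pow_add]
        field_simp

theorem sum_choose_le_two_rpow_mul_binEnt (hp0 : 0 < p) (hp : p ≤ 1 / 2) (n : ℕ) :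
    ∑ j ∈ range (n + 1) with ((j : ℕ) : ℝ) ≤ p * n, (n.choose j : ℝ) ≤ 2 ^ (n * binEnt p) := by
  have hq : 0 ≤ 1 - p := by linarith
  set s : Finset ℕ := {j ∈ range (n + 1) | (j : ℝ) ≤ p * n}
  suffices (∑ j ∈ s, (n.choose j : ℝ)) * 2 ^ (-(n * binEnt p)) ≤ 1 by
    rwa [← le_div_iff₀ (by positivity), one_div, ← rpow_neg zero_le_two, neg_neg] at this
  calc (∑ j ∈ s, (n.choose j : ℝ)) * 2 ^ (-(n * binEnt p))
      ≤ ∑ j ∈ s, n.choose j * (p ^ j * (1 - p) ^ (n - j)) := by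
        rw [sum_mul]
        refine sum_le_sum fun j hj => ?_
        rw [mem_filter, mem_range] at hj
        gcongr
        exact two_rpow_neg_mul_binEnt_le hp0 hp (by omega) hj.2
    _ ≤ ∑ j ∈ range (n + 1), n.choose j * (p ^ j * (1 - p) ^ (n - j)) :=
        sum_le_sum_of_subset_of_nonneg (filter_subset _ _) fun j _ _ => by
          have := pow_nonneg hq (n - j)
          positivity
    _ = (p + (1 - p)) ^ n := by
        rw [add_pow]
        exact sum_congr rfl fun j _ => by ring
    _ = 1 := by simp

end Entropy

theorem card_filter_hammingNorm_le_two_rpow {p : ℝ} (hp0 : 0 < p) (hp : p ≤ 1 / 2) (n : ℕ) :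
    (#{x : Fin n → ZMod 2 | (hammingNorm x : ℝ) ≤ p * n} : ℝ) ≤ 2 ^ (n * binEnt p) := by
  refine le_trans ?_ (sum_choose_le_two_rpow_mul_binEnt hp0 hp n)
  exact_mod_cast Fintype.card_fin n ▸ card_filter_hammingNorm_le (fun j => (j : ℝ) ≤ p * n)

theorem two_pow_mul_card_filter_hammingNorm_lt {n k : ℕ} {p : ℝ} (hp0 : 0 < p) (hp : p ≤ 1 / 2)
    (h : k + n * binEnt p < n) :
    2 ^ k * #{x : Fin n → ZMod 2 | (hammingNorm x : ℝ) ≤ p * n} < 2 ^ n := by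
  refine Nat.cast_lt (α := ℝ) |>.1 ?_
  calc ((2 ^ k * #{x : Fin n → ZMod 2 | (hammingNorm x : ℝ) ≤ p * n} : ℕ) : ℝ)
      ≤ 2 ^ (k : ℝ) * 2 ^ (n * binEnt p) := by
        push_cast
        rw [rpow_natCast]
        gcongr
        exact card_filter_hammingNorm_le_two_rpow hp0 hp n
    _ < 2 ^ (n : ℝ) := by
        rw [← rpow_add two_pos]
        exact rpow_lt_rpow_of_exponent_lt one_lt_two h
    _ = ((2 ^ n : ℕ) : ℝ) := by norm_cast

section Sparsifier

variable {n : ℕ}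

theorem hammingNorm_eq_wtOn_add_wtOn_compl (S : Finset (Fin n)) (c : Fin n → ZMod 2) :
    hammingNorm c = wtOn S c + wtOn Sᶜ c := by
  rw [hammingNorm, wtOn, wtOn,
    ← card_union_of_disjoint (disjoint_filter_filter disjoint_compl_right), ← filter_union,
    union_compl]

theorem hammingNorm_le_two_mul_wtOn_compl {y c : Fin n → ZMod 2}
    (h : hammingNorm y ≤ hammingNorm (y + c)) :
    hammingNorm c ≤ 2 * wtOn ({i | y i ≠ 0} : Finset (Fin n))ᶜ c := by
  set T : Finset (Fin n) := {i | y i ≠ 0}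
  have hflip : wtOn T c + wtOn T (y + c) = #T := by
    have key : ∀ a b : ZMod 2, a ≠ 0 → (a + b ≠ 0 ↔ ¬ b ≠ 0) := by decide
    rw [wtOn, wtOn, filter_congr (p := fun i => (y + c) i ≠ 0) (q := fun i => ¬ c i ≠ 0)
      fun i hi => key (y i) (c i) (mem_filter.1 hi).2]
    exact card_filter_add_card_filter_not _
  have hkeep : wtOn Tᶜ (y + c) = wtOn Tᶜ c := by
    refine congrArg card (filter_congr fun i hi => ?_)
    simp_all [T]
  have hc := hammingNorm_eq_wtOn_add_wtOn_compl T c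
  have hyc := hammingNorm_eq_wtOn_add_wtOn_compl T (y + c)
  change #T ≤ _ at h
  omega

theorem isSparsifier_compl_support {C : Submodule (ZMod 2) (Fin n → ZMod 2)} {y : Fin n → ZMod 2}
    (hy : ∀ c ∈ C, hammingNorm y ≤ hammingNorm (y + c)) :
    IsSparsifier C (1 / 2) ({i | y i ≠ 0} : Finset (Fin n))ᶜ := fun c hc => by
  have := hammingNorm_le_two_mul_wtOn_compl (hy c hc)
  rw [one_div_mul_eq_div, div_le_iff₀ two_pos]
  exact_mod_cast this.trans_eq (mul_comm _ _)

theorem exists_isSparsifier_of_forall_lt_hammingDist (C : Submodule (ZMod 2) (Fin n → ZMod 2))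
    {x : Fin n → ZMod 2} {ρ : ℝ} (hx : ∀ c ∈ C, ρ < hammingDist x c) :
    ∃ S : Finset (Fin n), IsSparsifier C (1 / 2) S ∧ (#S : ℝ) < n - ρ := by
  obtain ⟨c₀, hc₀, hmin⟩ := Set.exists_min_image (C : Set (Fin n → ZMod 2))
    (fun c => hammingNorm (x + c)) (Set.toFinite _) ⟨0, C.zero_mem⟩
  refine ⟨_, isSparsifier_compl_support (y := x + c₀) fun c hc => ?_, ?_⟩
  · rw [add_assoc]
    exact hmin _ (C.add_mem hc₀ hc)
  · have hwt := hx c₀ hc₀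
    rw [hammingDist_eq_hammingNorm, show -x = x from funext fun i => ZMod.neg_eq_self_mod_two _,
      hammingNorm] at hwt
    rw [card_compl, Nat.cast_sub (card_le_univ _), Fintype.card_fin]
    linarith

end Sparsifier

/-- If `ε ∈ (0, 1/2)` satisfies `H(1/2 - ε) < 1 - k/n`, then a `k`-dimensional
linear code `C ⊆ 𝔽₂ⁿ` has an unweighted one-sided `1/2`-sparsifier of size at
most `n(1/2 + ε)`. -/
theorem small_half_sparsifier_entropy (n k : ℕ) (C : Submodule (ZMod 2) (Fin n → ZMod 2))
    (hk : Module.finrank (ZMod 2) C = k) (ε : ℝ) (hε : ε ∈ Set.Ioo 0 (1 / 2 : ℝ))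
    (hH : binEnt (1 / 2 - ε) < 1 - (k : ℝ) / n) :
    ∃ S : Finset (Fin n), IsSparsifier C (1 / 2) S ∧ (S.card : ℝ) ≤ n * (1 / 2 + ε) := by
  classical
  obtain ⟨hε0, hε1⟩ := hε
  rcases n.eq_zero_or_pos with rfl | hn
  · refine ⟨∅, fun c _ => ?_, by simp⟩
    rw [Subsingleton.elim c 0, hammingNorm_zero]
    simp
  set p := 1 / 2 - ε with hp
  have hexp : k + n * binEnt p < n := by
    have := (mul_lt_mul_iff_right₀ (Nat.cast_pos.2 hn : (0 : ℝ) < n)).2 hH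
    rw [mul_sub, mul_div_cancel₀ _ (by positivity)] at this
    linarith
  have hC : #(C : Set (Fin n → ZMod 2)).toFinset = 2 ^ k := by
    rw [Set.toFinset_card, ← hk]
    convert Module.card_eq_pow_finrank (K := ZMod 2) (V := C) <;> simp
  have hcover : #(C : Set (Fin n → ZMod 2)).toFinset *
      #{x : Fin n → ZMod 2 | (hammingNorm x : ℝ) ≤ p * n} < Fintype.card (Fin n → ZMod 2) := by
    rw [hC, Fintype.card_fun, ZMod.card, Fintype.card_fin]
    exact two_pow_mul_card_filter_hammingNorm_lt (by linarith) (by linarith) hexp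
  obtain ⟨x, hx⟩ := exists_forall_not_hammingDist (fun j : ℕ => (j : ℝ) ≤ p * n) _ hcover
  obtain ⟨S, hS, hcard⟩ := exists_isSparsifier_of_forall_lt_hammingDist C (ρ := p * n)
    fun c hc => not_le.1 (hx c (Set.mem_toFinset.2 hc))
  exact ⟨S, hS, by rw [hp] at hcard; linarith⟩
end

section
/- Let C ⊆ F_2^n be a linear code of dimension k with 0 < k ≤ n. Then C has an unweighted one-sided 1/2-sparsifier S ⊆ [n] with |S| ≤ n/2 + sqrt((ln 2)/2 · n·k). -/
/-! A Chernoff bound shows that fewer than `2 ^ (n - k)` vectors have weight below `n / 2 - t`,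
`t = √((ln 2) / 2 · n k)`, so some coset `y + C` avoids all of them. Let `y` be a vector of least
weight in that coset. For `c ∈ C`, the inequality `wt y ≤ wt (y + c)` says that `c` has at least
as many nonzero coordinates on the zero set `S` of `y` as on its support, i.e.
`wt (c_S) ≥ wt c / 2`; and `|S| = n - wt y ≤ n / 2 + t`. -/

open Finset Real Pointwise

section HammingWeight

variable {n : ℕ}

lemma two_mul_wtOn_add_hammingNorm (y c : Fin n → ZMod 2) :
    2 * wtOn {i | y i = 0} c + hammingNorm y = hammingNorm c + hammingNorm (y + c) := by
  simp only [wtOn, hammingNorm, filter_filter, card_filter, mul_sum, ← sum_add_distrib,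
    Pi.add_apply]
  refine sum_congr rfl fun i _ => ?_
  generalize y i = a; generalize c i = b
  fin_cases a <;> fin_cases b <;> rfl

lemma card_filter_eq_zero_add_hammingNorm (y : Fin n → ZMod 2) :
    #{i | y i = 0} + hammingNorm y = n := by
  simpa [hammingNorm] using card_filter_add_card_filter_not (s := univ) (fun i => y i = 0)

theorem isSparsifier_half_of_forall_hammingNorm_le_add
    {C : Submodule (ZMod 2) (Fin n → ZMod 2)} {y : Fin n → ZMod 2}
    (hy : ∀ c ∈ C, hammingNorm y ≤ hammingNorm (y + c)) :
    IsSparsifier C (1 / 2) {i | y i = 0} := by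
  intro c hc
  have hcount : hammingNorm c ≤ 2 * wtOn {i | y i = 0} c := by
    have := two_mul_wtOn_add_hammingNorm y c
    have := hy c hc
    omega
  have : (hammingNorm c : ℝ) ≤ 2 * wtOn {i | y i = 0} c := by exact_mod_cast hcount
  linarith

end HammingWeight

lemma exists_mem_forall_le_add {M S : Type*} [AddMonoid M] [SetLike S M]
    [AddSubmonoidClass S M] (C : S) (f : M → ℕ) (y : M) :
    ∃ c₀ ∈ C, ∀ c ∈ C, f (y + c₀) ≤ f (y + c₀ + c) := by
  obtain ⟨c₀, hc₀, hmin⟩ :=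
    (measure fun c => f (y + c)).wf.has_min (C : Set M) ⟨0, zero_mem C⟩
  refine ⟨c₀, hc₀, fun c hc => ?_⟩
  rw [add_assoc]
  exact not_lt.1 (hmin (c₀ + c) (add_mem hc₀ hc))

lemma exists_forall_add_notMem_of_card_mul_card_lt {G : Type*} [AddGroup G] [Fintype G]
    [DecidableEq G] {A H : Finset G} (h : #A * #H < Fintype.card G) :
    ∃ y, ∀ x ∈ H, y + x ∉ A := by
  by_contra! hcover
  have hcover : univ ⊆ A - H := fun y _ => by
    obtain ⟨x, hx, hyx⟩ := hcover y
    simpa using sub_mem_sub hyx hx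
  have := (card_le_card hcover).trans card_sub_le
  rw [card_univ] at this
  omega

lemma sum_exp_mul_sub_two_mul_hammingNorm (n : ℕ) (l : ℝ) :
    ∑ y : Fin n → ZMod 2, exp (l * (n - 2 * hammingNorm y)) = (2 * cosh l) ^ n := by
  set g : ZMod 2 → ℝ := fun a => exp (l * (1 - 2 * if a ≠ 0 then 1 else 0))
  have hcoord (y : Fin n → ZMod 2) : exp (l * (n - 2 * hammingNorm y)) = ∏ i, g (y i) := by
    rw [← exp_sum, ← mul_sum, sum_sub_distrib, ← mul_sum]
    simp [hammingNorm, card_filter]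
  have hpoint : ∑ a, g a = 2 * cosh l := by
    rw [Fintype.sum_eq_add 0 1 zero_ne_one
      (fun a h => by fin_cases a; exacts [absurd rfl h.1, absurd rfl h.2]), cosh_eq]
    norm_num [g]; ring
  calc ∑ y : Fin n → ZMod 2, exp (l * (n - 2 * hammingNorm y))
      = ∏ _i : Fin n, ∑ a, g a := by
        rw [Fintype.prod_sum]; exact sum_congr rfl fun y _ => hcoord y
    _ = (2 * cosh l) ^ n := by simp [hpoint]

lemma card_hammingNorm_lt_mul_exp_lt (n : ℕ) {t : ℝ} (ht : 0 < t) :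
    (#{y : Fin n → ZMod 2 | (hammingNorm y : ℝ) < n / 2 - t} : ℝ) * exp (2 * t ^ 2 / n)
      < 2 ^ n := by
  set bad : Finset (Fin n → ZMod 2) := {y | (hammingNorm y : ℝ) < n / 2 - t}
  obtain hempty | ⟨y₀, hy₀⟩ := bad.eq_empty_or_nonempty
  · simp [hempty]
  have hn : (0 : ℝ) < n := by
    have := (mem_filter.1 hy₀).2
    have : (0 : ℝ) ≤ hammingNorm y₀ := by positivity
    linarith
  -- exponential moment method; `l = 2t/n` minimises `n l² / 2 - 2 l t`
  set l := 2 * t / n with hl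
  set E := exp (2 * t ^ 2 / n)
  have hmoment : #bad * exp (2 * l * t) < (2 * cosh l) ^ n :=
    calc #bad * exp (2 * l * t) = ∑ _y ∈ bad, exp (2 * l * t) := by simp
      _ < ∑ y ∈ bad, exp (l * (n - 2 * hammingNorm y)) := by
        refine sum_lt_sum_of_nonempty ⟨y₀, hy₀⟩ fun y hy => exp_lt_exp.2 ?_
        have := (mem_filter.1 hy).2
        have : 0 < l := by positivity
        nlinarith
      _ ≤ ∑ y, exp (l * (n - 2 * hammingNorm y)) :=
        sum_le_univ_sum_of_nonneg fun _ => (exp_pos _).le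
      _ = (2 * cosh l) ^ n := sum_exp_mul_sub_two_mul_hammingNorm n l
  have hcosh : (2 * cosh l) ^ n ≤ 2 ^ n * E :=
    calc (2 * cosh l) ^ n ≤ (2 * exp (l ^ 2 / 2)) ^ n := by
          gcongr; exact cosh_le_exp_half_sq l
      _ = 2 ^ n * E := by
          rw [mul_pow, ← exp_nat_mul, hl]; congr 2; field_simp
  have hE : exp (2 * l * t) = E * E := by
    rw [← exp_add, hl]; congr 1; field_simp; ring
  rw [hE, ← mul_assoc] at hmoment
  exact lt_of_mul_lt_mul_right (hmoment.trans_le hcosh) (exp_pos _).le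

/-- A `k`-dimensional linear code `C ⊆ 𝔽₂ⁿ` with `0 < k ≤ n` has an unweighted
one-sided `1/2`-sparsifier of size at most `n/2 + √((ln 2)/2 · n k)`. -/
theorem small_half_sparsifier (n k : ℕ) (C : Submodule (ZMod 2) (Fin n → ZMod 2))
    (hk : Module.finrank (ZMod 2) C = k) (hk0 : 0 < k) (hkn : k ≤ n) :
    ∃ S : Finset (Fin n), IsSparsifier C (1 / 2) S ∧
      (S.card : ℝ) ≤ (n : ℝ) / 2 + Real.sqrt (Real.log 2 / 2 * ((n : ℝ) * k)) := by
  classical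
  set t := √(log 2 / 2 * ((n : ℝ) * k))
  have hn : (0 : ℝ) < n := by exact_mod_cast hk0.trans_le hkn
  have ht : 0 < t := sqrt_pos.2 (by have := log_pos one_lt_two; positivity)
  have hexp : exp (2 * t ^ 2 / n) = 2 ^ k := by
    have : 2 * t ^ 2 / n = k * log 2 := by
      rw [sq_sqrt (by positivity)]; field_simp
    rw [this, exp_nat_mul, exp_log two_pos]
  have hcard : #({c | c ∈ C} : Finset (Fin n → ZMod 2)) = 2 ^ k := by
    rw [← Fintype.card_subtype, ← hk, Module.card_eq_pow_finrank (K := ZMod 2) (V := C),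
      ZMod.card]
  have hbad : #({y | (hammingNorm y : ℝ) < n / 2 - t} : Finset (Fin n → ZMod 2)) * 2 ^ k
      < 2 ^ n := by
    exact_mod_cast hexp ▸ card_hammingNorm_lt_mul_exp_lt n ht
  obtain ⟨y, hy⟩ := exists_forall_add_notMem_of_card_mul_card_lt
    (A := {y | (hammingNorm y : ℝ) < n / 2 - t}) (H := {c | c ∈ C})
    (by simpa [hcard] using hbad)
  obtain ⟨c₀, hc₀, hmin⟩ := exists_mem_forall_le_add C hammingNorm y
  refine ⟨({i | (y + c₀) i = 0} : Finset _),
    isSparsifier_half_of_forall_hammingNorm_le_add hmin, ?_⟩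
  have hlarge : n / 2 - t ≤ hammingNorm (y + c₀) := by
    simpa using hy c₀ (by simpa using hc₀)
  have hsum : (#{i | (y + c₀) i = 0} : ℝ) + hammingNorm (y + c₀) = n := by
    exact_mod_cast card_filter_eq_zero_add_hammingNorm (y + c₀)
  linarith
end

section
/- Let C ⊆ F_2^n be a linear code of dimension k with 0 < k ≤ n, let ℓ be a positive integer, and let α = 1 − 1/2^ℓ. Then C has an unweighted one-sided α-sparsifier S ⊆ [n] with |S| ≤ α·n + c·sqrt(n·k), where c = sqrt(ln 2)·(1 + sqrt 2). -/
/-!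
Halve the coordinate set `ℓ` times. Given `V`, a Chernoff bound and a union bound over the
`2^k` codewords give a word `τ` whose restriction to `V` is at distance at least
`(|V| - √(2 ln 2 |V| k)) / 2` from every codeword. Translating `τ` by a nearest codeword yields
a word `ρ` to which `0` is a nearest codeword; comparing `wt(c + ρ) ≥ wt(ρ)` on `V` shows that
the support `W` of `ρ` in `V` carries at most half the weight of every codeword on `V`.
Shrinking `W` to at most `|V| / 2` elements and iterating, the final `V` carries at most a
`2^{-ℓ}` fraction of every codeword and has size at least `n / 2^ℓ - (1 + √2) √(2 ln 2 n k / 2^ℓ)`,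
the losses forming a geometric series of ratio `1 / √2`. Its complement is the sparsifier.
-/

open Finset Real

section

variable {n : ℕ}

lemma wtOn_eq_sum (S : Finset (Fin n)) (c : Fin n → ZMod 2) :
    wtOn S c = ∑ i ∈ S, if c i ≠ 0 then 1 else 0 :=
  card_filter _ _

lemma wtOn_mono {S T : Finset (Fin n)} (h : S ⊆ T) (c : Fin n → ZMod 2) :
    wtOn S c ≤ wtOn T c :=
  card_le_card (filter_subset_filter _ h)

lemma wtOn_add_wtOn_compl (S : Finset (Fin n)) (c : Fin n → ZMod 2) :
    wtOn S c + wtOn Sᶜ c = hammingNorm c := by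
  simp only [wtOn_eq_sum, sum_add_sum_compl, hammingNorm, card_filter]

lemma wtOn_add_add_two_mul_wtOn_filter (S : Finset (Fin n)) (c ρ : Fin n → ZMod 2) :
    wtOn S (c + ρ) + 2 * wtOn (S.filter fun i => ρ i ≠ 0) c = wtOn S ρ + wtOn S c := by
  have key : ∀ a b : ZMod 2, ((if a + b ≠ 0 then 1 else 0) + 2 * if b ≠ 0 ∧ a ≠ 0 then 1 else 0)
      = (if b ≠ 0 then 1 else 0) + if a ≠ 0 then 1 else 0 := by decide
  simp only [wtOn_eq_sum, mul_sum, ← sum_add_distrib, sum_filter]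
  exact sum_congr rfl fun i _ => by simpa [ite_and] using key (c i) (ρ i)

lemma card_sub_two_mul_wtOn (S : Finset (Fin n)) (τ : Fin n → ZMod 2) :
    (S.card : ℝ) - 2 * wtOn S τ = ∑ i ∈ S, if τ i = 0 then 1 else -1 := by
  rw [wtOn_eq_sum, card_eq_sum_ones]
  push_cast
  rw [mul_sum, ← sum_sub_distrib]
  exact sum_congr rfl fun i _ => by split_ifs <;> simp_all; norm_num

lemma sum_exp_mul_card_sub_two_mul_wtOn (S : Finset (Fin n)) (t : ℝ) :
    ∑ τ : Fin n → ZMod 2, exp (t * (S.card - 2 * wtOn S τ)) = 2 ^ n * cosh t ^ S.card := by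
  have hfactor (i : Fin n) :
      ∑ b : ZMod 2, (if i ∈ S then exp (t * if b = 0 then 1 else -1) else 1)
        = 2 * if i ∈ S then cosh t else 1 := by
    rw [show (univ : Finset (ZMod 2)) = {0, 1} from rfl, sum_pair zero_ne_one]
    by_cases hi : i ∈ S <;> simp [hi, cosh_eq] <;> ring
  simp_rw [card_sub_two_mul_wtOn, mul_sum, exp_sum, ← Fintype.prod_ite_mem S]
  rw [← Fintype.prod_sum (κ := fun _ => ZMod 2)
      (fun i b => if i ∈ S then exp (t * if b = 0 then 1 else -1) else 1),
    Fintype.prod_congr _ _ hfactor, prod_mul_distrib, Fintype.prod_ite_mem]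
  simp

lemma exists_forall_mul_card_sub_two_mul_wtOn_add_le {ι : Type*} [Fintype ι]
    (f : ι → Fin n → ZMod 2) {k : ℕ} (hι : Fintype.card ι ≤ 2 ^ k) (S : Finset (Fin n)) (t : ℝ) :
    ∃ τ : Fin n → ZMod 2, ∀ i,
      t * (S.card - 2 * wtOn S (f i + τ)) ≤ k * log 2 + S.card * t ^ 2 / 2 := by
  set X := fun i τ => exp (t * (S.card - 2 * wtOn S (f i + τ)))
  have hX (i : ι) : ∑ τ, X i τ = 2 ^ n * cosh t ^ S.card := by
    rw [← sum_exp_mul_card_sub_two_mul_wtOn]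
    exact Equiv.sum_comp (Equiv.addLeft (f i)) fun τ => exp (t * (S.card - 2 * wtOn S τ))
  have hB : 2 ^ n * exp (k * log 2 + S.card * t ^ 2 / 2)
      = 2 ^ k * (2 ^ n * exp (t ^ 2 / 2) ^ S.card) := by
    rw [exp_add, exp_nat_mul, exp_log two_pos, mul_div_assoc, exp_nat_mul]
    ring
  have htotal : ∑ τ, ∑ i, X i τ
      ≤ ∑ _τ : Fin n → ZMod 2, exp (k * log 2 + S.card * t ^ 2 / 2) := by
    rw [sum_comm, sum_congr rfl fun i _ => hX i, sum_const, card_univ, sum_const, card_univ,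
      Fintype.card_fun, ZMod.card, Fintype.card_fin, nsmul_eq_mul, nsmul_eq_mul, Nat.cast_pow,
      Nat.cast_ofNat, hB]
    gcongr
    · exact_mod_cast hι
    · exact cosh_le_exp_half_sq t
  obtain ⟨τ, -, hτ⟩ := exists_le_of_sum_le univ_nonempty htotal
  refine ⟨τ, fun i => ?_⟩
  rw [← exp_le_exp]
  exact (single_le_sum (f := fun j => X j τ) (fun j _ => (exp_pos _).le) (mem_univ i)).trans hτ

lemma exists_forall_le_wtOn_add {ι : Type*} [Fintype ι] (f : ι → Fin n → ZMod 2) {k : ℕ}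
    (hι : Fintype.card ι ≤ 2 ^ k) (hk : 0 < k) (S : Finset (Fin n)) :
    ∃ τ : Fin n → ZMod 2, ∀ i, (S.card - √(2 * log 2 * S.card * k)) / 2 ≤ wtOn S (f i + τ) := by
  rcases S.eq_empty_or_nonempty with rfl | hS
  · exact ⟨0, fun i => by simp [wtOn]⟩
  set T := √(2 * log 2 * S.card * k)
  have hm : (0 : ℝ) < S.card := by exact_mod_cast hS.card_pos
  have hT : 0 < T := sqrt_pos.2 (by have := log_pos one_lt_two; positivity)
  have hT2 : T ^ 2 = 2 * log 2 * S.card * k := sq_sqrt (by positivity)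
  obtain ⟨τ, hτ⟩ := exists_forall_mul_card_sub_two_mul_wtOn_add_le f hι S (T / S.card)
  refine ⟨τ, fun i => ?_⟩
  -- `t = T / |S|` is the optimal Chernoff parameter: it makes the right-hand side `t * T`.
  have hopt : k * log 2 + S.card * (T / S.card) ^ 2 / 2 = T / S.card * T := by
    field_simp
    linarith
  have h := hτ i
  rw [hopt] at h
  linarith [le_of_mul_le_mul_left h (div_pos hT hm)]

lemma two_mul_wtOn_filter_le {S : Finset (Fin n)} {c ρ : Fin n → ZMod 2}
    (h : wtOn S ρ ≤ wtOn S (c + ρ)) : 2 * wtOn (S.filter fun i => ρ i ≠ 0) c ≤ wtOn S c := by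
  have := wtOn_add_add_two_mul_wtOn_filter S c ρ
  omega

lemma one_le_sqrt_two_mul_log_two_mul {m k : ℕ} (hm : 0 < m) (hk : 0 < k) :
    1 ≤ √(2 * log 2 * m * k) := by
  have hm' : (1 : ℝ) ≤ m := by exact_mod_cast hm
  have hk' : (1 : ℝ) ≤ k := by exact_mod_cast hk
  have hlog := log_two_gt_d9
  rw [one_le_sqrt]
  nlinarith [mul_le_mul hm' hk' zero_le_one (by positivity)]

theorem exists_halving_subset (C : Submodule (ZMod 2) (Fin n → ZMod 2)) {k : ℕ}
    (hk : Module.finrank (ZMod 2) C = k) (hk0 : 0 < k) (V : Finset (Fin n)) :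
    ∃ W ⊆ V, (∀ c ∈ C, 2 * wtOn W c ≤ wtOn V c) ∧ 2 * W.card ≤ V.card ∧
      (V.card - √(2 * log 2 * V.card * k)) / 2 ≤ W.card := by
  classical
  have hC : Fintype.card C = 2 ^ k := by
    rw [Module.card_eq_pow_finrank (K := ZMod 2), ZMod.card, hk]
  obtain ⟨τ, hτ⟩ := exists_forall_le_wtOn_add (Subtype.val : C → _) hC.le hk0 V
  -- Translating `τ` by a closest codeword `c₀` gives a word `ρ` to which `0` is a closest codeword.
  obtain ⟨c₀, hc₀⟩ := Finite.exists_min fun c : C => wtOn V (c + τ)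
  set ρ := (c₀ : Fin n → ZMod 2) + τ
  set W₀ := V.filter fun i => ρ i ≠ 0
  have hW₀ : ∀ c ∈ C, 2 * wtOn W₀ c ≤ wtOn V c := fun c hc =>
    two_mul_wtOn_filter_le (by simpa [ρ, add_assoc] using hc₀ ⟨c + c₀, C.add_mem hc c₀.2⟩)
  have hW₀card : (V.card - √(2 * log 2 * V.card * k)) / 2 ≤ W₀.card := hτ c₀
  have hhalf : (V.card - √(2 * log 2 * V.card * k)) / 2 ≤ (V.card / 2 : ℕ) := by
    rcases Nat.eq_zero_or_pos V.card with h0 | hpos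
    · simp [h0]
    · have := one_le_sqrt_two_mul_log_two_mul hpos hk0
      have : (V.card : ℝ) ≤ 2 * (V.card / 2 : ℕ) + 1 := by norm_cast; omega
      linarith
  obtain ⟨W, hWW₀, hWcard⟩ := exists_subset_card_eq (min_le_left W₀.card (V.card / 2))
  refine ⟨W, hWW₀.trans (filter_subset _ _),
    fun c hc => (Nat.mul_le_mul_left 2 (wtOn_mono hWW₀ c)).trans (hW₀ c hc), by omega, ?_⟩
  rw [hWcard]
  rcases min_cases W₀.card (V.card / 2) with ⟨h, -⟩ | ⟨h, -⟩ <;> rw [h] <;> assumption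

lemma half_add_half_sqrt_le {a d : ℝ} (ha : 0 ≤ a) (hd : d ≤ (1 + √2) * √a) :
    (d + √a) / 2 ≤ (1 + √2) * √(a / 2) := by
  have h2 : √2 * √2 = 2 := mul_self_sqrt zero_le_two
  have hrhs : (1 + √2) * √(a / 2) = ((1 + √2) * √a + √a) / 2 := by
    rw [sqrt_div ha]
    field_simp
    linear_combination -√a * h2
  linarith

theorem exists_iterated_halving (C : Submodule (ZMod 2) (Fin n → ZMod 2)) {k : ℕ}
    (hk : Module.finrank (ZMod 2) C = k) (hk0 : 0 < k) (j : ℕ) :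
    ∃ V : Finset (Fin n), (∀ c ∈ C, 2 ^ j * wtOn V c ≤ hammingNorm c) ∧
      (V.card : ℝ) * 2 ^ j ≤ n ∧
      n / 2 ^ j - V.card ≤ (1 + √2) * √(2 * log 2 * n * k / 2 ^ j) := by
  induction j with
  | zero => exact ⟨univ, fun c _ => by simp [wtOn, hammingNorm], by simp, by simp; positivity⟩
  | succ j ih =>
    obtain ⟨V, hwt, hcard, hloss⟩ := ih
    obtain ⟨W, -, hWwt, hWcard, hWloss⟩ := exists_halving_subset C hk hk0 V
    have hWV : (2 * W.card : ℝ) ≤ V.card := by exact_mod_cast hWcard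
    have hVa : √(2 * log 2 * V.card * k) ≤ √(2 * log 2 * n * k / 2 ^ j) := by
      refine sqrt_le_sqrt ?_
      rw [le_div_iff₀ (by positivity)]
      have := log_nonneg one_le_two
      nlinarith [mul_le_mul_of_nonneg_left hcard (by positivity : (0 : ℝ) ≤ 2 * log 2 * k)]
    refine ⟨W, fun c hc => ?_, ?_, ?_⟩
    · calc 2 ^ (j + 1) * wtOn W c = 2 ^ j * (2 * wtOn W c) := by ring
        _ ≤ 2 ^ j * wtOn V c := by gcongr; exact hWwt c hc
        _ ≤ hammingNorm c := hwt c hc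
    · rw [pow_succ]
      nlinarith [pow_pos (two_pos (α := ℝ)) j]
    · have ha : 2 * log 2 * n * k / 2 ^ (j + 1) = 2 * log 2 * n * k / 2 ^ j / 2 := by
        rw [pow_succ]; ring
      rw [ha]
      refine le_trans ?_ (half_add_half_sqrt_le (by positivity) hloss)
      have hn : (n : ℝ) / 2 ^ (j + 1) = n / 2 ^ j / 2 := by rw [pow_succ]; ring
      linarith

lemma isSparsifier_compl {C : Submodule (ZMod 2) (Fin n → ZMod 2)} {V : Finset (Fin n)}
    {ℓ : ℕ} (h : ∀ c ∈ C, 2 ^ ℓ * wtOn V c ≤ hammingNorm c) :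
    IsSparsifier C (1 - 1 / 2 ^ ℓ) Vᶜ := by
  intro c hc
  have hsum : (wtOn V c : ℝ) + wtOn Vᶜ c = hammingNorm c := by
    exact_mod_cast wtOn_add_wtOn_compl V c
  have hV : (2 : ℝ) ^ ℓ * wtOn V c ≤ hammingNorm c := by exact_mod_cast h c hc
  have hV' : (wtOn V c : ℝ) ≤ hammingNorm c / 2 ^ ℓ := by
    rw [le_div_iff₀ (by positivity)]
    linarith
  calc (1 - 1 / 2 ^ ℓ) * (hammingNorm c : ℝ) = hammingNorm c - hammingNorm c / 2 ^ ℓ := by ring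
    _ ≤ wtOn Vᶜ c := by linarith

end

theorem small_alpha_sparsifier_general (n k : ℕ) (C : Submodule (ZMod 2) (Fin n → ZMod 2))
    (hk : Module.finrank (ZMod 2) C = k) (hk0 : 0 < k)
    (ℓ : ℕ) (hℓ : 0 < ℓ) :
    ∃ S : Finset (Fin n), IsSparsifier C (1 - 1 / 2 ^ ℓ) S ∧
      (S.card : ℝ) ≤ (1 - 1 / 2 ^ ℓ) * n +
        Real.sqrt (Real.log 2) * (1 + Real.sqrt 2) * Real.sqrt ((n : ℝ) * k) := by
  obtain ⟨V, hwt, -, hloss⟩ := exists_iterated_halving C hk hk0 ℓ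
  refine ⟨Vᶜ, isSparsifier_compl hwt, ?_⟩
  have hcard : (Vᶜ.card : ℝ) = n - V.card := by
    rw [card_compl, Fintype.card_fin, Nat.cast_sub (by simpa using V.card_le_univ)]
  have hsqrt : √(2 * log 2 * n * k / 2 ^ ℓ) ≤ √(log 2) * √(n * k) := by
    rw [← sqrt_mul (log_nonneg one_le_two)]
    refine sqrt_le_sqrt ?_
    have h2ℓ : (2 : ℝ) ≤ 2 ^ ℓ := by simpa using pow_le_pow_right₀ one_le_two hℓ
    rw [div_le_iff₀ (by positivity)]
    have := log_nonneg one_le_two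
    nlinarith [mul_le_mul_of_nonneg_left h2ℓ (by positivity : (0 : ℝ) ≤ log 2 * (n * k))]
  calc (Vᶜ.card : ℝ) = (1 - 1 / 2 ^ ℓ) * n + (n / 2 ^ ℓ - V.card) := by rw [hcard]; ring
    _ ≤ (1 - 1 / 2 ^ ℓ) * n + (1 + √2) * (√(log 2) * √(n * k)) := by
      gcongr
      exact hloss.trans (by gcongr)
    _ = (1 - 1 / 2 ^ ℓ) * n + √(log 2) * (1 + √2) * √(n * k) := by ring

/-- For `α = 1 - 1/2^ℓ`, a `k`-dimensional linear code `C ⊆ 𝔽₂ⁿ` with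
`0 < k ≤ n` has an unweighted one-sided `α`-sparsifier of size at most
`α n + c √(n k)` where `c = √(ln 2) (1 + √2)`. -/
theorem small_alpha_sparsifier (n k : ℕ) (C : Submodule (ZMod 2) (Fin n → ZMod 2))
    (hk : Module.finrank (ZMod 2) C = k) (hk0 : 0 < k) (hkn : k ≤ n)
    (ℓ : ℕ) (hℓ : 0 < ℓ) :
    ∃ S : Finset (Fin n), IsSparsifier C (1 - 1 / 2 ^ ℓ) S ∧
      (S.card : ℝ) ≤ (1 - 1 / 2 ^ ℓ) * n +
        Real.sqrt (Real.log 2) * (1 + Real.sqrt 2) * Real.sqrt ((n : ℝ) * k) :=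
  small_alpha_sparsifier_general n k C hk hk0 ℓ hℓ
end

section
/- Let G = (V, E) be a finite graph with V nonempty. Then the number of subsets T ⊆ E that are 1/2-thin with respect to G is at least 2^(|E| − (|V| − 1)). Equivalently, a uniformly random subset T ⊆ E is 1/2-thin with probability at least 2^(1−|V|). -/
/-- The cut `δ(A)`: the set of edges of `G` with exactly one endpoint in `A`. -/
def cutEdges {V : Type*} (G : SimpleGraph V) (A : Set V) : Set (Sym2 V) :=
  {e | e ∈ G.edgeSet ∧ ∃ u v, e = s(u, v) ∧ u ∈ A ∧ v ∉ A}

/-- A set of edges `T` is `α`-thin with respect to `G` if for every vertex set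
`A`, `|T ∩ δ(A)| ≤ α · |δ(A)|`. -/
def IsThin {V : Type*} (G : SimpleGraph V) (α : ℝ) (T : Set (Sym2 V)) : Prop :=
  ∀ A : Set V, ((T ∩ cutEdges G A).ncard : ℝ) ≤ α * (cutEdges G A).ncard

/-!
Cuts form a group under symmetric difference, `δ(A) ∆ δ(B) = δ(A ∆ B)`, of size at most
`2^(|V| - 1)` since `δ(A) = δ(Aᶜ)`. In every coset `T ∆ {δ(A)}` with `T ⊆ E`, a member of
minimum size is `1/2`-thin: if it met some cut `δ(A)` in more than half of its edges, flipping
`δ(A)` would make it smaller. So the `1/2`-thin sets together with the cuts generate all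
`2^|E|` subsets of `E`, and there are at least `2^|E| / 2^(|V| - 1)` of them.
-/

open scoped symmDiff

lemma Set.ncard_image2_le {α β γ : Type*} (f : α → β → γ) {s : Set α} {t : Set β}
    (hs : s.Finite := by toFinite_tac) (ht : t.Finite := by toFinite_tac) :
    (Set.image2 f s t).ncard ≤ s.ncard * t.ncard := by
  rw [← Set.image_uncurry_prod, ← Set.ncard_prod]
  exact Set.ncard_image_le (hs.prod ht)

lemma Set.ncard_symmDiff_add_two_mul_ncard_inter {α : Type*} (s t : Set α)
    (hs : s.Finite := by toFinite_tac) (ht : t.Finite := by toFinite_tac) :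
    (s ∆ t).ncard + 2 * (s ∩ t).ncard = s.ncard + t.ncard := by
  have hunion := Set.ncard_union_add_ncard_inter s t hs ht
  have hsdiff := Set.ncard_sdiff_add_ncard_of_subset
    (Set.inter_subset_left.trans Set.subset_union_left : s ∩ t ⊆ s ∪ t) (hs.union ht)
  rw [show s ∆ t = (s ∪ t) \ (s ∩ t) from symmDiff_eq_sup_sdiff_inf ..]
  omega

section Cuts

variable {V : Type*} {G : SimpleGraph V}

lemma cutEdges_subset_edgeSet (A : Set V) : cutEdges G A ⊆ G.edgeSet := fun _ he => he.1

lemma mk_mem_cutEdges_iff {u v : V} {A : Set V} :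
    s(u, v) ∈ cutEdges G A ↔ G.Adj u v ∧ (u ∈ A ∧ v ∉ A ∨ v ∈ A ∧ u ∉ A) := by
  constructor
  · rintro ⟨hadj, a, b, hab, ha, hb⟩
    rcases Sym2.eq_iff.mp hab with ⟨rfl, rfl⟩ | ⟨rfl, rfl⟩
    exacts [⟨hadj, .inl ⟨ha, hb⟩⟩, ⟨hadj, .inr ⟨ha, hb⟩⟩]
  · rintro ⟨hadj, ⟨ha, hb⟩ | ⟨ha, hb⟩⟩
    exacts [⟨hadj, u, v, rfl, ha, hb⟩, ⟨hadj, v, u, Sym2.eq_swap, ha, hb⟩]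

lemma cutEdges_symmDiff (A B : Set V) : cutEdges G A ∆ cutEdges G B = cutEdges G (A ∆ B) := by
  ext e
  induction e using Sym2.ind with
  | _ u v =>
    simp only [Set.mem_symmDiff, mk_mem_cutEdges_iff]
    tauto

lemma cutEdges_compl (A : Set V) : cutEdges G Aᶜ = cutEdges G A := by
  ext e
  induction e using Sym2.ind with
  | _ u v =>
    simp only [mk_mem_cutEdges_iff, Set.mem_compl_iff]
    tauto

lemma cutEdges_empty : cutEdges G (∅ : Set V) = ∅ := by
  ext e
  induction e using Sym2.ind with
  | _ u v => simp [mk_mem_cutEdges_iff]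

lemma isThin_half_iff {T : Set (Sym2 V)} :
    IsThin G (1 / 2) T ↔ ∀ A, 2 * (T ∩ cutEdges G A).ncard ≤ (cutEdges G A).ncard := by
  refine forall_congr' fun A => ?_
  rw [← Nat.cast_le (α := ℝ)]
  push_cast
  constructor <;> intro h <;> linarith

lemma ncard_range_cutEdges_le [Fintype V] [Nonempty V] :
    (Set.range (cutEdges G)).ncard ≤ 2 ^ (Fintype.card V - 1) := by
  obtain ⟨v⟩ := ‹Nonempty V›
  have hrange : Set.range (cutEdges G) ⊆ cutEdges G '' 𝒫 {v}ᶜ := by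
    rintro _ ⟨A, rfl⟩
    by_cases hv : v ∈ A
    · exact ⟨Aᶜ, Set.subset_compl_singleton_iff.mpr (· hv), cutEdges_compl A⟩
    · exact ⟨A, Set.subset_compl_singleton_iff.mpr hv, rfl⟩
  calc (Set.range (cutEdges G)).ncard
      ≤ (cutEdges G '' 𝒫 {v}ᶜ).ncard := Set.ncard_le_ncard hrange
    _ ≤ (𝒫 ({v}ᶜ : Set V)).ncard := Set.ncard_image_le
    _ = 2 ^ (Fintype.card V - 1) := by
      rw [Set.ncard_powerset, Set.ncard_compl, Set.ncard_singleton, Nat.card_eq_fintype_card]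

variable [Finite V]

lemma ncard_symmDiff_cutEdges_lt {T : Set (Sym2 V)} {A : Set V}
    (hA : (cutEdges G A).ncard < 2 * (T ∩ cutEdges G A).ncard) :
    (T ∆ cutEdges G A).ncard < T.ncard := by
  have := Set.ncard_symmDiff_add_two_mul_ncard_inter T (cutEdges G A)
  omega

lemma exists_isThin_half_symmDiff_mem_range_cutEdges (T : Set (Sym2 V)) (hT : T ⊆ G.edgeSet) :
    ∃ T₀ ⊆ G.edgeSet, IsThin G (1 / 2) T₀ ∧ T ∆ T₀ ∈ Set.range (cutEdges G) := by
  induction hn : T.ncard using Nat.strong_induction_on generalizing T with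
  | _ n ih =>
    by_cases hthin : IsThin G (1 / 2) T
    · exact ⟨T, hT, hthin, ∅, by rw [cutEdges_empty, symmDiff_self, Set.bot_eq_empty]⟩
    obtain ⟨A, hA⟩ : ∃ A, (cutEdges G A).ncard < 2 * (T ∩ cutEdges G A).ncard := by
      simpa only [isThin_half_iff, not_forall, not_le] using hthin
    have hsub : T ∆ cutEdges G A ⊆ G.edgeSet :=
      Set.union_subset (fun _ he => hT he.1) (fun _ he => cutEdges_subset_edgeSet A he.1)
    obtain ⟨T₀, hT₀, hthin₀, B, hB⟩ :=
      ih _ (hn ▸ ncard_symmDiff_cutEdges_lt hA) _ hsub rfl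
    refine ⟨T₀, hT₀, hthin₀, B ∆ A, ?_⟩
    rw [← cutEdges_symmDiff, hB, symmDiff_right_comm, symmDiff_symmDiff_cancel_right]

lemma powerset_edgeSet_subset_image2_symmDiff :
    𝒫 G.edgeSet ⊆ Set.image2 symmDiff {T | T ⊆ G.edgeSet ∧ IsThin G (1 / 2) T}
      (Set.range (cutEdges G)) := by
  intro T hT
  obtain ⟨T₀, hT₀, hthin₀, hcut⟩ := exists_isThin_half_symmDiff_mem_range_cutEdges T hT
  exact ⟨T₀, ⟨hT₀, hthin₀⟩, T ∆ T₀, hcut, by rw [symmDiff_comm T, symmDiff_symmDiff_cancel_left]⟩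

end Cuts

lemma two_pow_ncard_edgeSet_le {V : Type*} [Fintype V] [Nonempty V] (G : SimpleGraph V) :
    2 ^ G.edgeSet.ncard ≤
      {T : Set (Sym2 V) | T ⊆ G.edgeSet ∧ IsThin G (1 / 2) T}.ncard * 2 ^ (Fintype.card V - 1) :=
  calc 2 ^ G.edgeSet.ncard = (𝒫 G.edgeSet).ncard := (Set.ncard_powerset _).symm
    _ ≤ _ := Set.ncard_le_ncard powerset_edgeSet_subset_image2_symmDiff
    _ ≤ _ := Set.ncard_image2_le _
    _ ≤ _ := Nat.mul_le_mul_left _ ncard_range_cutEdges_le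

/-- A finite graph on a nonempty vertex set has at least `2^(|E| - (|V| - 1))`
many `1/2`-thin subgraphs; equivalently, a uniformly random subset of the edges
is `1/2`-thin with probability at least `2^(1 - |V|)`. -/
theorem num_half_thin_subgraphs {V : Type*} [Fintype V] [Nonempty V]
    (G : SimpleGraph V) :
    (2 : ℝ) ^ ((G.edgeSet.ncard : ℤ) - ((Fintype.card V : ℤ) - 1)) ≤
      ({T : Set (Sym2 V) | T ⊆ G.edgeSet ∧ IsThin G (1 / 2) T}.ncard : ℝ) ∧
    (2 : ℝ) ^ (1 - (Fintype.card V : ℤ)) ≤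
      ({T : Set (Sym2 V) | T ⊆ G.edgeSet ∧ IsThin G (1 / 2) T}.ncard : ℝ) /
        2 ^ G.edgeSet.ncard := by
  set m := G.edgeSet.ncard
  set n := Fintype.card V
  set N := {T : Set (Sym2 V) | T ⊆ G.edgeSet ∧ IsThin G (1 / 2) T}.ncard
  have hpred : ((n - 1 : ℕ) : ℤ) = n - 1 := by have : 0 < n := Fintype.card_pos; omega
  have hcount : (2 : ℝ) ^ m ≤ N * 2 ^ (n - 1) := by exact_mod_cast two_pow_ncard_edgeSet_le G
  have hmain : (2 : ℝ) ^ ((m : ℤ) - ((n : ℤ) - 1)) ≤ N := by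
    rw [← hpred, zpow_sub₀ two_ne_zero, zpow_natCast, zpow_natCast, div_le_iff₀ (by positivity)]
    exact hcount
  refine ⟨hmain, ?_⟩
  rw [show (1 : ℤ) - n = ((m : ℤ) - ((n : ℤ) - 1)) - m by ring, zpow_sub₀ two_ne_zero,
    zpow_natCast]
  gcongr
end

section
/- Let C ⊆ F_2^n be a linear code that is non-degenerate, i.e., for every coordinate i ∈ [n] there exists c ∈ C with c_i ≠ 0. Then for any α ∈ [0,1], every unweighted one-sided α-sparsifier S ⊆ [n] of C satisfies |S| ≥ α·n. -/
/-!
Evaluation at a coordinate `i` is a nonzero additive map `C → 𝔽₂`, so its two fibres are cosets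
of its kernel: exactly half of the codewords are nonzero at `i`. Double counting the pairs `(c, i)`
with `c i ≠ 0` then gives `∑_{c ∈ C} wt(c_S) = |S| |C| / 2` for every `S`, and summing the
sparsifier inequality over all codewords yields `α n |C| / 2 ≤ |S| |C| / 2`.
-/

open Finset

theorem AddMonoidHom.two_mul_card_ne_zero {G : Type*} [AddGroup G] [Fintype G]
    (f : G →+ ZMod 2) (hf : ∃ g, f g ≠ 0) :
    2 * #{g | f g ≠ 0} = Fintype.card G := by
  obtain ⟨g₀, hg₀⟩ := hf
  have h_ne_zero_iff : ∀ x : ZMod 2, x ≠ 0 ↔ x = f g₀ := by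
    revert hg₀; generalize f g₀ = y; revert y; decide
  have h_fibres : #{g | f g = f g₀} = #{g | f g = 0} :=
    AddMonoidHom.card_fiber_eq_of_mem_range f ⟨g₀, rfl⟩ ⟨0, map_zero f⟩
  have h_ne_zero : #{g | f g ≠ 0} = #{g | f g = f g₀} := by simp only [h_ne_zero_iff]
  have h_split : #{g | f g ≠ 0} + #{g | f g = 0} = Fintype.card G := by
    simpa using card_filter_add_card_filter_not (s := univ) fun g => f g ≠ 0
  omega

theorem sum_wtOn_eq_card_mul {ι : Type*} [Fintype ι] {n : ℕ} (v : ι → Fin n → ZMod 2)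
    (S : Finset (Fin n)) {k : ℕ} (hk : ∀ i ∈ S, #{x | v x i ≠ 0} = k) :
    ∑ x, wtOn S (v x) = #S * k := by
  simp only [wtOn, card_filter]
  rw [sum_comm, sum_congr rfl fun i hi => (card_filter _ _).symm.trans (hk i hi),
    sum_const, smul_eq_mul]

theorem hammingNorm_eq_wtOn_univ {n : ℕ} (c : Fin n → ZMod 2) : hammingNorm c = wtOn univ c :=
  rfl

theorem sparsifier_lower_bound_general (n : ℕ) (C : Submodule (ZMod 2) (Fin n → ZMod 2))
    (hnd : ∀ i : Fin n, ∃ c ∈ C, c i ≠ 0)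
    (α : ℝ)
    (S : Finset (Fin n)) (hS : IsSparsifier C α S) :
    α * n ≤ (S.card : ℝ) := by
  rcases Nat.eq_zero_or_pos n with rfl | hn
  · simp
  have := Fintype.ofFinite C
  set k := Fintype.card C / 2
  have h_column : ∀ i, #{c : C | (c : Fin n → ZMod 2) i ≠ 0} = k := fun i => by
    obtain ⟨c, hc, hci⟩ := hnd i
    have h_half : 2 * #{c : C | (c : Fin n → ZMod 2) i ≠ 0} = Fintype.card C :=
      ((Pi.evalAddMonoidHom _ i).comp C.toAddSubgroup.subtype).two_mul_card_ne_zero ⟨⟨c, hc⟩, hci⟩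
    omega
  have hk : (0 : ℝ) < k := by
    obtain ⟨c, hc, hci⟩ := hnd ⟨0, hn⟩
    rw [← h_column ⟨0, hn⟩]
    exact_mod_cast card_pos.mpr ⟨(⟨c, hc⟩ : C), by simpa using hci⟩
  have h_total : ∑ c : C, (hammingNorm (c : Fin n → ZMod 2) : ℝ) = n * k := by
    simpa [hammingNorm_eq_wtOn_univ] using
      congrArg (Nat.cast (R := ℝ)) (sum_wtOn_eq_card_mul _ univ fun i _ => h_column i)
  have h_on_S : ∑ c : C, (wtOn S (c : Fin n → ZMod 2) : ℝ) = S.card * k := by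
    exact_mod_cast sum_wtOn_eq_card_mul _ S fun i _ => h_column i
  have h_avg : α * (n * k) ≤ S.card * k := by
    rw [← h_total, ← h_on_S, mul_sum]
    exact sum_le_sum fun c _ => hS c c.2
  exact le_of_mul_le_mul_right (by linarith) hk

/-- For a non-degenerate linear code `C ⊆ 𝔽₂ⁿ` (every coordinate is nonzero in
some codeword), every unweighted one-sided `α`-sparsifier has size at least
`α n`. -/
theorem sparsifier_lower_bound (n : ℕ) (C : Submodule (ZMod 2) (Fin n → ZMod 2))
    (hnd : ∀ i : Fin n, ∃ c ∈ C, c i ≠ 0)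
    (α : ℝ) (hα : α ∈ Set.Icc (0 : ℝ) 1)
    (S : Finset (Fin n)) (hS : IsSparsifier C α S) :
    α * n ≤ (S.card : ℝ) :=
  sparsifier_lower_bound_general n C hnd α S hS
end
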